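/- Any continuous bounded prior density u on the simplex Δ^{m−1} is the pointwise limit of finite mixtures of Dirichlet densities: Σ_{x: Σx_i=n} b_{x,n} · D(p | x_1+1, …, x_m+1) → u(p) as n → ∞, where b_{x,n} are nonnegative weights summing to 1 proportional to u(x/n). -/

import Mathlib

/-!
Write `W x q = multinomial x · ∏ qᵢ ^ xᵢ` for the multinomial probabilities and
`Bₙ u q = ∑_{|x| = n} u (x / n) · W x q` for the Bernstein polynomials of `u` on the simplex.
Since `D(p | x + 1) = (n + k)! / n! · W x p` when `|x| = n`, the mixture equals `Bₙ u p / Jₙ`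
with `Jₙ = (∑_{|y| = n} u (y / n)) · n! / (n + k)!`.

The multinomial variance `n qᵢ (1 - qᵢ)` makes `x / n` concentrate at `q` under the weights
`x ↦ W x q`, so `Bₙ u → u` pointwise on the simplex, with `|Bₙ u| ≤ sup |u|`. The Dirichlet integral
`∫_Δ ∏ qᵢ ^ xᵢ = ∏ xᵢ! / (|x| + k)!` gives `Jₙ = ∫_Δ Bₙ u`, which tends to `∫_Δ u = 1` by
dominated convergence.
-/

open Finset MeasureTheory

/-- The Dirichlet density with parameter vector `α` at the point `p`:
`D(p | α) = Γ(∑ α) / ∏ Γ(α i) · ∏ p i ^ (α i - 1)`. -/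
noncomputable def dirichletPDF {m : ℕ} (α : Fin m → ℝ) (p : Fin m → ℝ) : ℝ :=
  (Real.Gamma (∑ i, α i) / ∏ i, Real.Gamma (α i)) * ∏ i, p i ^ (α i - 1)

open Filter Topology Finset.Nat
open scoped Nat

section Multinomial

variable {m n : ℕ}

noncomputable def multinomialWeight (x : Fin m → ℕ) (q : Fin m → ℝ) : ℝ :=
  Nat.multinomial univ x * ∏ i, q i ^ x i

lemma multinomialWeight_nonneg (x : Fin m → ℕ) {q : Fin m → ℝ} (hq : ∀ i, 0 ≤ q i) :
    0 ≤ multinomialWeight x q :=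
  mul_nonneg (Nat.cast_nonneg _) (prod_nonneg fun i _ => pow_nonneg (hq i) _)

lemma continuous_multinomialWeight (x : Fin m → ℕ) : Continuous (multinomialWeight x) :=
  continuous_const.mul (continuous_finsetProd _ fun i _ => (continuous_apply i).pow _)

lemma sum_multinomialWeight {q : Fin m → ℝ} (hq : ∑ i, q i = 1) (n : ℕ) :
    ∑ x ∈ antidiagonalTuple m n, multinomialWeight x q = 1 := by
  rw [← piAntidiag_univ_fin_eq_antidiagonalTuple]
  simpa [multinomialWeight, hq] using (sum_pow_eq_sum_piAntidiag univ q n).symm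

lemma prod_add_single_one {M : Type*} [CommMonoid M] (f : Fin m → ℕ → M) (z : Fin m → ℕ)
    (i : Fin m) :
    ∏ j, f j ((z + Pi.single i 1 : Fin m → ℕ) j) = f i (z i + 1) * ∏ j ∈ {i}ᶜ, f j (z j) := by
  rw [Fintype.prod_eq_mul_prod_compl i]
  congr 1
  · simp
  · exact prod_congr rfl fun j hj => by simp [Pi.single_eq_of_ne (by simpa using hj : j ≠ i)]

lemma succ_mul_multinomial_add_single (i : Fin m) {z : Fin m → ℕ} (hz : ∑ j, z j = n) :
    (z i + 1) * Nat.multinomial univ (z + Pi.single i 1) = (n + 1) * Nat.multinomial univ z := by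
  have hsum : ∑ j, (z + Pi.single i 1 : Fin m → ℕ) j = n + 1 := by simp [sum_add_distrib, hz]
  have hfact : ∏ j, ((z + Pi.single i 1 : Fin m → ℕ) j)! = (z i + 1) * ∏ j, (z j)! := by
    rw [prod_add_single_one (fun _ a => a !), Fintype.prod_eq_mul_prod_compl i, Nat.factorial_succ,
      mul_assoc]
  refine Nat.eq_of_mul_eq_mul_left (prod_pos (s := univ) fun j _ => (z j).factorial_pos) ?_
  calc (∏ j, (z j)!) * ((z i + 1) * Nat.multinomial univ (z + Pi.single i 1))
      = (∏ j, ((z + Pi.single i 1 : Fin m → ℕ) j)!)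
          * Nat.multinomial univ (z + Pi.single i 1) := by
        rw [hfact]; ring
    _ = (n + 1) * ((∏ j, (z j)!) * Nat.multinomial univ z) := by
        rw [Nat.multinomial_spec, Nat.multinomial_spec, hsum, hz, Nat.factorial_succ]
    _ = _ := by ring

lemma succ_mul_multinomialWeight_add_single (i : Fin m) {z : Fin m → ℕ} (hz : ∑ j, z j = n)
    (q : Fin m → ℝ) :
    (z i + 1) * multinomialWeight (z + Pi.single i 1) q
      = (n + 1) * q i * multinomialWeight z q := by
  have hmul := congrArg (Nat.cast (R := ℝ)) (succ_mul_multinomial_add_single i hz)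
  push_cast at hmul
  have hprod : ∏ j, q j ^ (z + Pi.single i 1 : Fin m → ℕ) j = q i * ∏ j, q j ^ z j := by
    rw [prod_add_single_one (fun j a => q j ^ a), Fintype.prod_eq_mul_prod_compl i, pow_succ]
    ring
  rw [multinomialWeight, multinomialWeight, hprod, ← mul_assoc, hmul]
  ring

lemma sum_antidiagonalTuple_succ_eq_sum_add_single {M : Type*} [AddCommMonoid M] (i : Fin m)
    (f : (Fin m → ℕ) → M) (hf : ∀ x, x i = 0 → f x = 0) :
    ∑ x ∈ antidiagonalTuple m (n + 1), f x
      = ∑ z ∈ antidiagonalTuple m n, f (z + Pi.single i 1) := by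
  have hsum (z : Fin m → ℕ) : ∑ j, (z + Pi.single i 1 : Fin m → ℕ) j = ∑ j, z j + 1 := by
    simp [sum_add_distrib]
  let e : (Fin m → ℕ) ↪ (Fin m → ℕ) := ⟨(· + Pi.single i 1), add_left_injective _⟩
  have hsub : (antidiagonalTuple m n).map e ⊆ antidiagonalTuple m (n + 1) := by
    intro x hx
    obtain ⟨z, hz, rfl⟩ := Finset.mem_map.1 hx
    rw [mem_antidiagonalTuple] at hz ⊢
    exact (hsum z).trans (by rw [hz])
  rw [← sum_subset hsub, sum_map]
  · rfl
  intro x hx hxe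
  refine hf x (by_contra fun hxi => ?_)
  have hx' : x - Pi.single i 1 + Pi.single i 1 = x := by
    ext j
    rcases eq_or_ne j i with rfl | hj
    · simp [Nat.one_le_iff_ne_zero.2 hxi]
    · simp [hj]
  refine hxe (Finset.mem_map.2 ⟨x - Pi.single i 1, ?_, hx'⟩)
  rw [mem_antidiagonalTuple] at hx ⊢
  have := hsum (x - Pi.single i 1)
  rw [hx', hx] at this
  omega

lemma sum_mul_multinomialWeight_succ (i : Fin m) (g : ℕ → ℝ) (q : Fin m → ℝ) :
    ∑ x ∈ antidiagonalTuple m (n + 1), x i * g (x i) * multinomialWeight x q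
      = (n + 1) * q i * ∑ z ∈ antidiagonalTuple m n, g (z i + 1) * multinomialWeight z q := by
  rw [sum_antidiagonalTuple_succ_eq_sum_add_single i _ fun x hx => by simp [hx], mul_sum]
  refine sum_congr rfl fun z hz => ?_
  have := succ_mul_multinomialWeight_add_single i (mem_antidiagonalTuple.1 hz) q
  simp only [Pi.add_apply, Pi.single_eq_same, Nat.cast_add, Nat.cast_one]
  linear_combination g (z i + 1) * this

variable {q : Fin m → ℝ}

lemma sum_mul_multinomialWeight (hq : ∑ i, q i = 1) (i : Fin m) (n : ℕ) :
    ∑ x ∈ antidiagonalTuple m n, x i * multinomialWeight x q = n * q i := by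
  cases n with
  | zero => simp [antidiagonalTuple_zero_right]
  | succ n =>
    simpa [sum_multinomialWeight hq] using sum_mul_multinomialWeight_succ i (fun _ => 1) q

lemma sum_sq_mul_multinomialWeight (hq : ∑ i, q i = 1) (i : Fin m) (n : ℕ) :
    ∑ x ∈ antidiagonalTuple m n, (x i : ℝ) ^ 2 * multinomialWeight x q
      = n * q i * ((n - 1) * q i + 1) := by
  cases n with
  | zero => simp [antidiagonalTuple_zero_right]
  | succ n =>
    have h := sum_mul_multinomialWeight_succ (n := n) i (fun a => (a : ℝ)) q
    simp only [Nat.cast_add, Nat.cast_one, add_mul, one_mul, sum_add_distrib,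
      sum_mul_multinomialWeight hq, sum_multinomialWeight hq] at h
    simp only [sq, h]
    push_cast
    ring

lemma sum_sq_sub_mul_multinomialWeight (hq : ∑ i, q i = 1) (i : Fin m) (n : ℕ) :
    ∑ x ∈ antidiagonalTuple m n, ((x i : ℝ) - n * q i) ^ 2 * multinomialWeight x q
      = n * q i * (1 - q i) := by
  have hexpand (x : Fin m → ℕ) : ((x i : ℝ) - n * q i) ^ 2 * multinomialWeight x q
      = (x i : ℝ) ^ 2 * multinomialWeight x q - 2 * n * q i * (x i * multinomialWeight x q)
        + (n * q i) ^ 2 * multinomialWeight x q := by ring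
  rw [sum_congr rfl fun x _ => hexpand x, sum_add_distrib, sum_sub_distrib, ← mul_sum, ← mul_sum,
    sum_sq_mul_multinomialWeight hq, sum_mul_multinomialWeight hq, sum_multinomialWeight hq]
  ring

lemma sum_sum_sq_div_sub_mul_multinomialWeight_le (hq : q ∈ stdSimplex ℝ (Fin m))
    (hn : n ≠ 0) :
    ∑ x ∈ antidiagonalTuple m n, (∑ i, ((x i : ℝ) / n - q i) ^ 2) * multinomialWeight x q
      ≤ 1 / n := by
  have hn' : (n : ℝ) ≠ 0 := Nat.cast_ne_zero.2 hn
  have hvar (i : Fin m) :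
      ∑ x ∈ antidiagonalTuple m n, ((x i : ℝ) / n - q i) ^ 2 * multinomialWeight x q
        = q i * (1 - q i) / n := by
    have hscale (x : Fin m → ℕ) : ((x i : ℝ) / n - q i) ^ 2 * multinomialWeight x q
        = ((x i : ℝ) - n * q i) ^ 2 * multinomialWeight x q / n ^ 2 := by
      field_simp
    rw [sum_congr rfl fun x _ => hscale x, ← sum_div, sum_sq_sub_mul_multinomialWeight hq.2]
    field_simp
  calc ∑ x ∈ antidiagonalTuple m n, (∑ i, ((x i : ℝ) / n - q i) ^ 2) * multinomialWeight x q
      = ∑ i, q i * (1 - q i) / n := by simp only [sum_mul, ← hvar]; exact sum_comm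
    _ ≤ ∑ i, q i / n := by
        gcongr with i
        nlinarith [hq.1 i]
    _ = 1 / n := by rw [← sum_div, hq.2]

end Multinomial

lemma ContinuousWithinAt.exists_abs_sub_le_add_mul_sum_sq {ι : Type*} [Fintype ι]
    {s : Set (ι → ℝ)} {u : (ι → ℝ) → ℝ} {q : ι → ℝ} {C : ℝ} (hu : ContinuousWithinAt u s q)
    (hq : q ∈ s) (hC : ∀ p ∈ s, |u p| ≤ C) {ε : ℝ} (hε : 0 < ε) :
    ∃ K, 0 ≤ K ∧ ∀ p ∈ s, |u p - u q| ≤ ε + K * ∑ i, (p i - q i) ^ 2 := by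
  obtain ⟨δ, hδ, hclose⟩ := Metric.continuousWithinAt_iff.1 hu ε hε
  have hK : 0 ≤ 2 * C / δ ^ 2 := by have := (abs_nonneg _).trans (hC q hq); positivity
  refine ⟨2 * C / δ ^ 2, hK, fun p hp => ?_⟩
  by_cases hpq : dist p q < δ
  · have := hclose hp hpq
    rw [Real.dist_eq] at this
    nlinarith [sum_nonneg fun i (_ : i ∈ univ) => sq_nonneg (p i - q i)]
  · obtain ⟨i, hi⟩ : ∃ i, δ ≤ dist (p i) (q i) := by
      by_contra! h
      exact hpq ((dist_pi_lt_iff hδ).2 h)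
    have hfar : δ ^ 2 ≤ ∑ j, (p j - q j) ^ 2 := by
      rw [Real.dist_eq] at hi
      calc δ ^ 2 ≤ (p i - q i) ^ 2 := by nlinarith [abs_nonneg (p i - q i), sq_abs (p i - q i)]
        _ ≤ ∑ j, (p j - q j) ^ 2 :=
          single_le_sum (f := fun j => (p j - q j) ^ 2) (fun j _ => sq_nonneg _) (mem_univ i)
    calc |u p - u q| ≤ |u p| + |u q| := abs_sub _ _
      _ ≤ 2 * C / δ ^ 2 * δ ^ 2 := by
        rw [div_mul_cancel₀ _ (by positivity)]; linarith [hC p hp, hC q hq]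
      _ ≤ ε + 2 * C / δ ^ 2 * ∑ j, (p j - q j) ^ 2 := by nlinarith

section Bernstein

variable {m : ℕ}

noncomputable def simplexBernstein (u : (Fin m → ℝ) → ℝ) (n : ℕ) (q : Fin m → ℝ) : ℝ :=
  ∑ x ∈ antidiagonalTuple m n, u (fun i => x i / n) * multinomialWeight x q

lemma continuous_simplexBernstein (u : (Fin m → ℝ) → ℝ) (n : ℕ) :
    Continuous (simplexBernstein u n) :=
  continuous_finsetSum _ fun x _ => continuous_const.mul (continuous_multinomialWeight x)

lemma div_mem_stdSimplex {n : ℕ} {x : Fin m → ℕ} (hx : x ∈ antidiagonalTuple m n) (hn : n ≠ 0) :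
    (fun i => (x i : ℝ) / n) ∈ stdSimplex ℝ (Fin m) := by
  refine ⟨fun i => by positivity, ?_⟩
  rw [← sum_div, ← Nat.cast_sum, mem_antidiagonalTuple.1 hx, div_self (Nat.cast_ne_zero.2 hn)]

variable {u : (Fin m → ℝ) → ℝ} {q : Fin m → ℝ} {n : ℕ}

lemma abs_simplexBernstein_le {C : ℝ} (hC : ∀ p ∈ stdSimplex ℝ (Fin m), |u p| ≤ C)
    (hq : q ∈ stdSimplex ℝ (Fin m)) (hn : n ≠ 0) : |simplexBernstein u n q| ≤ C := by
  calc |simplexBernstein u n q|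
      ≤ ∑ x ∈ antidiagonalTuple m n, |u (fun i => x i / n)| * multinomialWeight x q := by
        refine (abs_sum_le_sum_abs _ _).trans_eq (sum_congr rfl fun x _ => ?_)
        rw [abs_mul, abs_of_nonneg (multinomialWeight_nonneg x hq.1)]
    _ ≤ ∑ x ∈ antidiagonalTuple m n, C * multinomialWeight x q := by
        gcongr with x hx
        · exact multinomialWeight_nonneg x hq.1
        · exact hC _ (div_mem_stdSimplex hx hn)
    _ = C := by rw [← mul_sum, sum_multinomialWeight hq.2, mul_one]

lemma abs_simplexBernstein_sub_le {ε K : ℝ} (hK : 0 ≤ K)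
    (hu : ∀ p ∈ stdSimplex ℝ (Fin m), |u p - u q| ≤ ε + K * ∑ i, (p i - q i) ^ 2)
    (hq : q ∈ stdSimplex ℝ (Fin m)) (hn : n ≠ 0) :
    |simplexBernstein u n q - u q| ≤ ε + K / n := by
  have hW (x : Fin m → ℕ) := multinomialWeight_nonneg x hq.1
  calc |simplexBernstein u n q - u q|
      = |∑ x ∈ antidiagonalTuple m n, (u (fun i => x i / n) - u q) * multinomialWeight x q| := by
        simp only [simplexBernstein, sub_mul, sum_sub_distrib, ← mul_sum,
          sum_multinomialWeight hq.2, mul_one]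
    _ ≤ ∑ x ∈ antidiagonalTuple m n, |u (fun i => x i / n) - u q| * multinomialWeight x q := by
        refine (abs_sum_le_sum_abs _ _).trans_eq (sum_congr rfl fun x _ => ?_)
        rw [abs_mul, abs_of_nonneg (hW x)]
    _ ≤ ∑ x ∈ antidiagonalTuple m n,
          (ε + K * ∑ i, ((x i : ℝ) / n - q i) ^ 2) * multinomialWeight x q := by
        gcongr with x hx
        · exact hW x
        · exact hu _ (div_mem_stdSimplex hx hn)
    _ = ε + K * ∑ x ∈ antidiagonalTuple m n,
          (∑ i, ((x i : ℝ) / n - q i) ^ 2) * multinomialWeight x q := by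
        simp only [add_mul, sum_add_distrib, ← mul_sum, sum_multinomialWeight hq.2, mul_one,
          mul_assoc]
    _ ≤ ε + K / n := by
        rw [div_eq_mul_one_div K]
        gcongr
        exact sum_sum_sq_div_sub_mul_multinomialWeight_le hq hn

theorem tendsto_simplexBernstein (hu : ContinuousOn u (stdSimplex ℝ (Fin m)))
    (hq : q ∈ stdSimplex ℝ (Fin m)) :
    Tendsto (fun n => simplexBernstein u n q) atTop (𝓝 (u q)) := by
  obtain ⟨C, hC⟩ := (isCompact_stdSimplex ℝ (Fin m)).exists_bound_of_continuousOn hu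
  refine Metric.tendsto_nhds.2 fun ε hε => ?_
  obtain ⟨K, hK0, hK⟩ := (hu q hq).exists_abs_sub_le_add_mul_sum_sq hq hC (half_pos hε)
  filter_upwards [eventually_ne_atTop 0,
    (tendsto_const_div_atTop_nhds_zero_nat K).eventually (gt_mem_nhds (half_pos hε))]
    with n hn hKn
  rw [Real.dist_eq]
  linarith [abs_simplexBernstein_sub_le hK0 hK hq hn]

end Bernstein

lemma integral_fin_cons {E : Type*} [NormedAddCommGroup E] [NormedSpace ℝ E] {n : ℕ}
    {f : (Fin (n + 1) → ℝ) → E} (hf : Integrable f) :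
    ∫ y, f y = ∫ t, ∫ z, f (Fin.cons t z) := by
  have he := (volume_preserving_piFinSuccAbove (fun _ : Fin (n + 1) => ℝ) 0).symm
  rw [← he.integral_comp', Measure.volume_eq_prod, integral_prod]
  · simp [MeasurableEquiv.piFinSuccAbove_symm_apply, Fin.insertNthEquiv, Fin.insertNth_zero']
  · rw [← Measure.volume_eq_prod]
    exact (he.integrable_comp_emb (MeasurableEquiv.measurableEmbedding _)).2 hf

theorem integral_pow_mul_one_sub_pow (a b : ℕ) :
    ∫ t in (0 : ℝ)..1, t ^ a * (1 - t) ^ b = (a ! * b ! / (a + b + 1)! : ℝ) := by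
  have h := Complex.betaIntegral_eq_Gamma_mul_div (a + 1) (b + 1)
    (by norm_cast; omega) (by norm_cast; omega)
  simp only [Complex.betaIntegral, add_sub_cancel_right] at h
  rw [show (a + 1 + (b + 1) : ℂ) = ((a + b + 1 : ℕ) : ℂ) + 1 by push_cast; ring] at h
  simp only [Complex.Gamma_nat_eq_factorial, Complex.cpow_natCast] at h
  rw [← Complex.ofReal_inj, ← intervalIntegral.integral_ofReal]
  push_cast
  exact h

section CornerSimplex

variable {k : ℕ}

/-- The standard simplex in `ℝ^{k+1}` is parametrized, as in the normalization of the prior, by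
its last `k` coordinates `y ∈ cornerSimplex k`, the first one being `1 - ∑ y`. -/
def cornerSimplex (k : ℕ) : Set (Fin k → ℝ) := {y | (∀ i, 0 ≤ y i) ∧ ∑ i, y i ≤ 1}

def simplexLift (y : Fin k → ℝ) : Fin (k + 1) → ℝ := Fin.cons (1 - ∑ i, y i) y

lemma continuous_simplexLift : Continuous (simplexLift (k := k)) :=
  continuous_pi fun i => Fin.cases (continuous_const.sub (continuous_finsetSum _ fun j _ =>
    continuous_apply j)) (fun j => continuous_apply j) i

lemma sum_simplexLift (y : Fin k → ℝ) : ∑ i, simplexLift y i = 1 := by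
  simp [simplexLift, Fin.sum_univ_succ]

lemma mem_cornerSimplex_iff {y : Fin k → ℝ} : y ∈ cornerSimplex k ↔ 0 ≤ simplexLift y := by
  simp [cornerSimplex, simplexLift, Pi.le_def, Fin.forall_fin_succ, and_comm]

lemma simplexLift_mem_stdSimplex {y : Fin k → ℝ} (hy : y ∈ cornerSimplex k) :
    simplexLift y ∈ stdSimplex ℝ (Fin (k + 1)) :=
  ⟨mem_cornerSimplex_iff.1 hy, sum_simplexLift y⟩

lemma cornerSimplex_subset_pi_Icc : cornerSimplex k ⊆ Set.univ.pi fun _ => Set.Icc 0 1 :=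
  fun _ hy i _ => ⟨hy.1 i, (single_le_sum (fun j _ => hy.1 j) (mem_univ i)).trans hy.2⟩

lemma cornerSimplex_eq_preimage : cornerSimplex k = simplexLift ⁻¹' Set.Ici 0 := by
  ext y
  exact mem_cornerSimplex_iff

lemma isClosed_cornerSimplex : IsClosed (cornerSimplex k) := by
  rw [cornerSimplex_eq_preimage]
  exact isClosed_Ici.preimage continuous_simplexLift

lemma isCompact_cornerSimplex : IsCompact (cornerSimplex k) :=
  (isCompact_univ_pi fun _ => isCompact_Icc).of_isClosed_subset isClosed_cornerSimplex
    cornerSimplex_subset_pi_Icc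

lemma measurableSet_cornerSimplex : MeasurableSet (cornerSimplex k) :=
  isClosed_cornerSimplex.measurableSet

lemma simplexLift_cons_one (t : ℝ) (z : Fin k → ℝ) : simplexLift (Fin.cons t z) 1 = t := rfl

lemma simplexLift_cons_succAbove_one {t : ℝ} (ht : t ≠ 1) (z : Fin k → ℝ) (i : Fin (k + 1)) :
    simplexLift (Fin.cons t z) (Fin.succAbove 1 i) = (1 - t) * simplexLift ((1 - t)⁻¹ • z) i := by
  have h1t : 1 - t ≠ 0 := sub_ne_zero.2 ht.symm
  cases i using Fin.cases with
  | zero =>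
    simp only [simplexLift, Fin.one_succAbove_zero, Fin.cons_zero, Fin.sum_univ_succ,
      Fin.cons_succ, Pi.smul_apply, smul_eq_mul, ← mul_sum]
    field_simp
    ring
  | succ j => simp [simplexLift, h1t]

lemma cons_mem_cornerSimplex_iff {t : ℝ} (ht : t < 1) (z : Fin k → ℝ) :
    Fin.cons t z ∈ cornerSimplex (k + 1) ↔ 0 ≤ t ∧ (1 - t)⁻¹ • z ∈ cornerSimplex k := by
  simp only [mem_cornerSimplex_iff, Pi.le_def, Fin.forall_iff_succAbove (1 : Fin (k + 2)),
    simplexLift_cons_one, simplexLift_cons_succAbove_one ht.ne, Pi.zero_apply,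
    mul_nonneg_iff_of_pos_left (sub_pos.2 ht)]

lemma prod_simplexLift_cons_pow {t : ℝ} (ht : t ≠ 1) (z : Fin k → ℝ) (x : Fin (k + 2) → ℕ) :
    ∏ i, simplexLift (Fin.cons t z) i ^ x i
      = t ^ x 1 * ((1 - t) ^ (∑ i, Fin.removeNth 1 x i)
        * ∏ i, simplexLift ((1 - t)⁻¹ • z) i ^ Fin.removeNth 1 x i) := by
  rw [Fin.prod_univ_succAbove _ 1]
  simp only [simplexLift_cons_one, simplexLift_cons_succAbove_one ht, mul_pow, prod_mul_distrib,
    prod_pow_eq_pow_sum, Fin.removeNth]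

/-- The slice of `cornerSimplex (k + 1)` at first coordinate `t ∈ [0, 1)` is
`(1 - t) • cornerSimplex k`. -/
lemma integral_indicator_cornerSimplex_cons (x : Fin (k + 2) → ℕ) {t : ℝ} (ht : t ≠ 1) :
    ∫ z, (cornerSimplex (k + 1)).indicator (fun y => ∏ i, simplexLift y i ^ x i) (Fin.cons t z)
      = (Set.Icc 0 1).indicator (fun t => t ^ x 1 * (1 - t) ^ (∑ i, Fin.removeNth 1 x i + k)) t
        * ∫ z in cornerSimplex k, ∏ i, simplexLift z i ^ Fin.removeNth 1 x i := by
  by_cases htI : t ∈ Set.Icc 0 1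
  · have ht1 : t < 1 := lt_of_le_of_ne htI.2 ht
    have hslice (z : Fin k → ℝ) :
        (cornerSimplex (k + 1)).indicator (fun y => ∏ i, simplexLift y i ^ x i) (Fin.cons t z)
          = t ^ x 1 * (1 - t) ^ (∑ i, Fin.removeNth 1 x i) * (cornerSimplex k).indicator
            (fun y => ∏ i, simplexLift y i ^ Fin.removeNth 1 x i) ((1 - t)⁻¹ • z) := by
      have hmem := cons_mem_cornerSimplex_iff ht1 z
      by_cases hz : (1 - t)⁻¹ • z ∈ cornerSimplex k
      · rw [Set.indicator_of_mem (hmem.2 ⟨htI.1, hz⟩), Set.indicator_of_mem hz,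
          prod_simplexLift_cons_pow ht, mul_assoc]
      · rw [Set.indicator_of_notMem (fun h => hz (hmem.1 h).2), Set.indicator_of_notMem hz,
          mul_zero]
    simp only [hslice, integral_const_mul, Measure.integral_comp_smul, integral_indicator
      measurableSet_cornerSimplex, Module.finrank_fin_fun, Set.indicator_of_mem htI, smul_eq_mul]
    rw [inv_pow, inv_inv, abs_of_pos (pow_pos (sub_pos.2 ht1) k), pow_add]
    ring
  · rw [Set.indicator_of_notMem htI, zero_mul]
    refine integral_eq_zero_of_ae (.of_forall fun z => Set.indicator_of_notMem (fun hz => htI ?_) _)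
    exact cornerSimplex_subset_pi_Icc hz 0 (Set.mem_univ _)

end CornerSimplex

theorem integral_prod_simplexLift_pow (k : ℕ) (x : Fin (k + 1) → ℕ) :
    ∫ y in cornerSimplex k, ∏ i, simplexLift y i ^ x i = (∏ i, (x i)! : ℝ) / (∑ i, x i + k)! := by
  induction k with
  | zero =>
    have : cornerSimplex 0 = Set.univ := by ext; simp [cornerSimplex]
    simp [this, simplexLift, measureReal_def, volume_pi, Nat.factorial_ne_zero]
  | succ k ih =>
    set x' := Fin.removeNth 1 x
    have hint :
        Integrable ((cornerSimplex (k + 1)).indicator fun y => ∏ i, simplexLift y i ^ x i) :=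
      ((continuous_finsetProd _ fun i _ => (continuous_apply i).pow _).comp
        continuous_simplexLift).continuousOn.integrableOn_compact isCompact_cornerSimplex
        |>.integrable_indicator measurableSet_cornerSimplex
    have hsum : ∑ i, x i = x 1 + ∑ i, x' i := Fin.sum_univ_succAbove _ 1
    have hprod : ∏ i, ((x i)! : ℝ) = (x 1)! * ∏ i, ((x' i)! : ℝ) := Fin.prod_univ_succAbove _ 1
    calc ∫ y in cornerSimplex (k + 1), ∏ i, simplexLift y i ^ x i
        = ∫ t, ∫ z, (cornerSimplex (k + 1)).indicator (fun y => ∏ i, simplexLift y i ^ x i)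
            (Fin.cons t z) := by
          rw [← integral_indicator measurableSet_cornerSimplex, integral_fin_cons hint]
      _ = ∫ t, (Set.Icc 0 1).indicator (fun t => t ^ x 1 * (1 - t) ^ (∑ i, x' i + k)) t
            * ∫ z in cornerSimplex k, ∏ i, simplexLift z i ^ x' i :=
          integral_congr_ae <| (volume.ae_ne 1).mono fun t ht =>
            integral_indicator_cornerSimplex_cons x ht
      _ = (∫ t in (0 : ℝ)..1, t ^ x 1 * (1 - t) ^ (∑ i, x' i + k))
            * ∫ z in cornerSimplex k, ∏ i, simplexLift z i ^ x' i := by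
          rw [integral_mul_const, integral_indicator measurableSet_Icc,
            integral_Icc_eq_integral_Ioc, ← intervalIntegral.integral_of_le zero_le_one]
      _ = (∏ i, (x i)! : ℝ) / (∑ i, x i + (k + 1))! := by
          rw [integral_pow_mul_one_sub_pow, ih, hprod, hsum,
            show x 1 + ∑ i, x' i + (k + 1) = x 1 + (∑ i, x' i + k) + 1 by ring]
          field_simp

lemma integral_multinomialWeight_simplexLift {k n : ℕ} {x : Fin (k + 1) → ℕ}
    (hx : ∑ i, x i = n) :
    ∫ y in cornerSimplex k, multinomialWeight x (simplexLift y) = (n ! / (n + k)! : ℝ) := by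
  have hspec : (∏ i, (x i)! : ℝ) * Nat.multinomial univ x = n ! := by
    rw [← hx]; exact_mod_cast Nat.multinomial_spec univ x
  simp only [multinomialWeight]
  rw [integral_const_mul, integral_prod_simplexLift_pow, hx, ← hspec]
  field_simp

lemma integral_simplexBernstein_simplexLift {k : ℕ} (u : (Fin (k + 1) → ℝ) → ℝ) (n : ℕ) :
    ∫ y in cornerSimplex k, simplexBernstein u n (simplexLift y)
      = (∑ x ∈ antidiagonalTuple (k + 1) n, u (fun i => x i / n)) * (n ! / (n + k)! : ℝ) := by
  have hint (x : Fin (k + 1) → ℕ) :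
      Integrable (fun y => u (fun i => x i / n) * multinomialWeight x (simplexLift y))
        (volume.restrict (cornerSimplex k)) :=
    (continuous_const.mul ((continuous_multinomialWeight x).comp
      continuous_simplexLift)).continuousOn.integrableOn_compact isCompact_cornerSimplex
  simp only [simplexBernstein, integral_finsetSum _ fun x _ => hint x, integral_const_mul, sum_mul]
  exact sum_congr rfl fun x hx => by
    rw [integral_multinomialWeight_simplexLift (mem_antidiagonalTuple.1 hx)]

theorem tendsto_integral_simplexBernstein_simplexLift {k : ℕ} {u : (Fin (k + 1) → ℝ) → ℝ}
    (hu : ContinuousOn u (stdSimplex ℝ (Fin (k + 1)))) :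
    Tendsto (fun n => ∫ y in cornerSimplex k, simplexBernstein u n (simplexLift y)) atTop
      (𝓝 (∫ y in cornerSimplex k, u (simplexLift y))) := by
  obtain ⟨C, hC⟩ := (isCompact_stdSimplex ℝ (Fin (k + 1))).exists_bound_of_continuousOn hu
  have : IsFiniteMeasure (volume.restrict (cornerSimplex k)) :=
    isFiniteMeasure_restrict.2 isCompact_cornerSimplex.measure_lt_top.ne
  refine tendsto_integral_filter_of_dominated_convergence (fun _ => C)
    (.of_forall fun n => ((continuous_simplexBernstein u n).comp
      continuous_simplexLift).aestronglyMeasurable) ?_ (integrable_const C) ?_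
  · filter_upwards [eventually_ne_atTop 0] with n hn
    exact ae_restrict_of_forall_mem measurableSet_cornerSimplex fun y hy =>
      abs_simplexBernstein_le hC (simplexLift_mem_stdSimplex hy) hn
  · exact ae_restrict_of_forall_mem measurableSet_cornerSimplex fun y hy =>
      tendsto_simplexBernstein hu (simplexLift_mem_stdSimplex hy)

lemma dirichletPDF_add_one {k n : ℕ} {x : Fin (k + 1) → ℕ} (hx : ∑ i, x i = n)
    (p : Fin (k + 1) → ℝ) :
    dirichletPDF (fun i => (x i : ℝ) + 1) p = ((n + k)! / n ! : ℝ) * multinomialWeight x p := by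
  have hspec : (∏ i, (x i)! : ℝ) * Nat.multinomial univ x = n ! := by
    rw [← hx]; exact_mod_cast Nat.multinomial_spec univ x
  have hsum : ∑ i, ((x i : ℝ) + 1) = (n + k : ℕ) + 1 := by
    rw [sum_add_distrib, ← Nat.cast_sum, hx, sum_const, card_univ, Fintype.card_fin]
    push_cast
    ring
  simp only [dirichletPDF, hsum, Real.Gamma_nat_eq_factorial, add_sub_cancel_right,
    Real.rpow_natCast, multinomialWeight]
  field_simp
  rw [← hspec]
  ring

lemma sum_div_mul_dirichletPDF_add_one {k : ℕ} (u : (Fin (k + 1) → ℝ) → ℝ) (n : ℕ)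
    (p : Fin (k + 1) → ℝ) :
    ∑ x ∈ antidiagonalTuple (k + 1) n,
        (u (fun i => (x i : ℝ) / n) / ∑ y ∈ antidiagonalTuple (k + 1) n, u (fun i => y i / n))
          * dirichletPDF (fun i => (x i : ℝ) + 1) p
      = simplexBernstein u n p / ((∑ y ∈ antidiagonalTuple (k + 1) n, u (fun i => y i / n))
          * (n ! / (n + k)! : ℝ)) := by
  rw [simplexBernstein, sum_div]
  refine sum_congr rfl fun x hx => ?_
  rw [dirichletPDF_add_one (mem_antidiagonalTuple.1 hx)]
  simp only [div_eq_mul_inv, mul_inv, inv_inv]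
  ring

theorem dirichlet_mixture_approximation_general
    (k : ℕ) (u : (Fin (k + 1) → ℝ) → ℝ)
    (hu : ContinuousOn u (stdSimplex ℝ (Fin (k + 1))))
    (hnorm : ∫ y in {y : Fin k → ℝ | (∀ i, 0 ≤ y i) ∧ ∑ i, y i ≤ 1},
        u (Fin.cons (1 - ∑ i, y i) y) = 1)
    (p : Fin (k + 1) → ℝ) (hp : p ∈ stdSimplex ℝ (Fin (k + 1))) :
    Filter.Tendsto
      (fun n : ℕ => ∑ x ∈ Finset.Nat.antidiagonalTuple (k + 1) n,
        (u (fun i => (x i : ℝ) / n) /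
            ∑ y ∈ Finset.Nat.antidiagonalTuple (k + 1) n,
              u (fun i => (y i : ℝ) / n)) *
          dirichletPDF (fun i => (x i : ℝ) + 1) p)
      Filter.atTop (nhds (u p)) := by
  have hnorm' : ∫ y in cornerSimplex k, u (simplexLift y) = 1 := hnorm
  have hmass := tendsto_integral_simplexBernstein_simplexLift hu
  simp only [integral_simplexBernstein_simplexLift, hnorm'] at hmass
  simpa only [sum_div_mul_dirichletPDF_add_one, div_one, Pi.div_def] using
    (tendsto_simplexBernstein hu hp).div hmass one_ne_zero

/-- **Dirichlet-mixture approximation of a continuous prior density.**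
Let `u` be a continuous, bounded, nonnegative prior density on the simplex
`Δ^{m-1}` (`m = k + 1`), normalized so that it integrates to `1` over the
simplex (parametrized by its last `k` coordinates). With nonnegative weights
`b_{x,n} = u(x/n) / ∑_y u(y/n)` (summing to `1`, proportional to `u(x/n)`),
the finite Dirichlet mixtures
`∑_{x : ∑ x i = n} b_{x,n} · D(p | x₁+1, …, x_m+1)` converge pointwise to
`u(p)` on the simplex as `n → ∞`. -/
theorem dirichlet_mixture_approximation
    (k : ℕ) (u : (Fin (k + 1) → ℝ) → ℝ)
    (hu : ContinuousOn u (stdSimplex ℝ (Fin (k + 1))))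
    (hb : ∃ C : ℝ, ∀ p ∈ stdSimplex ℝ (Fin (k + 1)), |u p| ≤ C)
    (hnonneg : ∀ p ∈ stdSimplex ℝ (Fin (k + 1)), 0 ≤ u p)
    (hnorm : ∫ y in {y : Fin k → ℝ | (∀ i, 0 ≤ y i) ∧ ∑ i, y i ≤ 1},
        u (Fin.cons (1 - ∑ i, y i) y) = 1)
    (p : Fin (k + 1) → ℝ) (hp : p ∈ stdSimplex ℝ (Fin (k + 1))) :
    Filter.Tendsto
      (fun n : ℕ => ∑ x ∈ Finset.Nat.antidiagonalTuple (k + 1) n,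
        (u (fun i => (x i : ℝ) / n) /
            ∑ y ∈ Finset.Nat.antidiagonalTuple (k + 1) n,
              u (fun i => (y i : ℝ) / n)) *
          dirichletPDF (fun i => (x i : ℝ) + 1) p)
      Filter.atTop (nhds (u p)) :=
  dirichlet_mixture_approximation_general k u hu hnorm p hp
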